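/- The bivariate polynomials Q_n(t,q) = ∑_{π ∈ AV₁₃₂(n)} t^{a₃₁₂(π)} q^{a₁₂(π)} satisfy Q_n(t,q) = ∑_{k=1}^{n} q^{k-1} Q_{k-1}(t, q) Q_{n-k}(t, t^k q), with Q_0(t,q) = 1. -/
import Mathlib


open Finset

/-- A permutation of `{1,…,n}` (modeled on `Fin n`) is 132-avoiding if there are
no indices `i < j < l` with `π i < π l < π j`. -/
def avoids132 {n : ℕ} (π : Equiv.Perm (Fin n)) : Prop :=
  ∀ i j l : Fin n, i < j → j < l → ¬(π i < π l ∧ π l < π j)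

instance avoids132.dec {n : ℕ} : DecidablePred (avoids132 (n := n)) := fun π => by
  unfold avoids132; infer_instance

/-- A permutation is 123-avoiding if there are no indices `i < j < l` with
`π i < π j < π l`. -/
def avoids123 {n : ℕ} (π : Equiv.Perm (Fin n)) : Prop :=
  ∀ i j l : Fin n, i < j → j < l → ¬(π i < π j ∧ π j < π l)

instance avoids123.dec {n : ℕ} : DecidablePred (avoids123 (n := n)) := fun π => by
  unfold avoids123; infer_instance

/-- The finite set of 132-avoiding permutations of `{1,…,n}`. -/
def AV132 (n : ℕ) : Finset (Equiv.Perm (Fin n)) := univ.filter avoids132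

/-- The finite set of 123-avoiding permutations of `{1,…,n}`. -/
def AV123 (n : ℕ) : Finset (Equiv.Perm (Fin n)) := univ.filter avoids123

/-- number of non-inversions: pairs `i < j` with `π i < π j` (pattern 12). -/
def a12 {n : ℕ} (π : Equiv.Perm (Fin n)) : ℕ :=
  (univ.filter (fun p : Fin n × Fin n => p.1 < p.2 ∧ π p.1 < π p.2)).card

/-- number of inversions: pairs `i < j` with `π j < π i` (pattern 21). -/
def a21 {n : ℕ} (π : Equiv.Perm (Fin n)) : ℕ :=
  (univ.filter (fun p : Fin n × Fin n => p.1 < p.2 ∧ π p.2 < π p.1)).card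

/-- occurrences of pattern 123: triples `i < j < l` with `π i < π j < π l`. -/
def a123 {n : ℕ} (π : Equiv.Perm (Fin n)) : ℕ :=
  (univ.filter (fun p : Fin n × Fin n × Fin n =>
    p.1 < p.2.1 ∧ p.2.1 < p.2.2 ∧ π p.1 < π p.2.1 ∧ π p.2.1 < π p.2.2)).card

/-- occurrences of pattern 321: triples `i < j < l` with `π l < π j < π i`. -/
def a321 {n : ℕ} (π : Equiv.Perm (Fin n)) : ℕ :=
  (univ.filter (fun p : Fin n × Fin n × Fin n =>
    p.1 < p.2.1 ∧ p.2.1 < p.2.2 ∧ π p.2.2 < π p.2.1 ∧ π p.2.1 < π p.1)).card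

/-- occurrences of pattern 231: triples `i < j < l` with `π l < π i < π j`. -/
def a231 {n : ℕ} (π : Equiv.Perm (Fin n)) : ℕ :=
  (univ.filter (fun p : Fin n × Fin n × Fin n =>
    p.1 < p.2.1 ∧ p.2.1 < p.2.2 ∧ π p.2.2 < π p.1 ∧ π p.1 < π p.2.1)).card

/-- occurrences of pattern 213: triples `i < j < l` with `π j < π i < π l`. -/
def a213 {n : ℕ} (π : Equiv.Perm (Fin n)) : ℕ :=
  (univ.filter (fun p : Fin n × Fin n × Fin n =>
    p.1 < p.2.1 ∧ p.2.1 < p.2.2 ∧ π p.2.1 < π p.1 ∧ π p.1 < π p.2.2)).card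

/-- occurrences of pattern 312: triples `i < j < l` with `π j < π l < π i`. -/
def a312 {n : ℕ} (π : Equiv.Perm (Fin n)) : ℕ :=
  (univ.filter (fun p : Fin n × Fin n × Fin n =>
    p.1 < p.2.1 ∧ p.2.1 < p.2.2 ∧ π p.2.1 < π p.2.2 ∧ π p.2.2 < π p.1)).card

/-- occurrences of pattern 4321: quadruples `i < j < l < m` with
`π m < π l < π j < π i`. -/
def a4321 {n : ℕ} (π : Equiv.Perm (Fin n)) : ℕ :=
  (univ.filter (fun p : Fin n × Fin n × Fin n × Fin n =>
    p.1 < p.2.1 ∧ p.2.1 < p.2.2.1 ∧ p.2.2.1 < p.2.2.2 ∧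
    π p.2.2.2 < π p.2.2.1 ∧ π p.2.2.1 < π p.2.1 ∧ π p.2.1 < π p.1)).card

/-- `Q_n(t,q) = ∑_(π ∈ AV₁₃₂(n)) t^(a_(312) π) q^(a_(12) π)`,
as a function of `t, q`. -/
def Q312 (n : ℕ) (t q : ℤ) : ℤ :=
  ∑ π ∈ AV132 n, t ^ a312 π * q ^ a12 π

def glueFun (a b : ℕ) (α : Equiv.Perm (Fin a)) (β : Equiv.Perm (Fin b)) (i : Fin (a+1+b)) :
    Fin (a+1+b) :=
  if h : i.val < a then ⟨b + (α ⟨i.val, h⟩).val, by have := (α ⟨i.val, h⟩).isLt; omega⟩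
  else if _h2 : i.val = a then ⟨a + b, by omega⟩
  else ⟨(β ⟨i.val - (a+1), by have := i.isLt; omega⟩).val,
    by have := (β ⟨i.val - (a+1), by have := i.isLt; omega⟩).isLt; omega⟩

theorem glueFun_val_lt {a b : ℕ} (α : Equiv.Perm (Fin a)) (β : Equiv.Perm (Fin b))
    {i : Fin (a+1+b)} (h : i.val < a) :
    (glueFun a b α β i).val = b + (α ⟨i.val, h⟩).val := by
  unfold glueFun; rw [dif_pos h]

theorem glueFun_val_eq {a b : ℕ} (α : Equiv.Perm (Fin a)) (β : Equiv.Perm (Fin b))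
    {i : Fin (a+1+b)} (h : i.val = a) :
    (glueFun a b α β i).val = a + b := by
  unfold glueFun; rw [dif_neg (by omega), dif_pos h]

theorem glueFun_val_gt {a b : ℕ} (α : Equiv.Perm (Fin a)) (β : Equiv.Perm (Fin b))
    {i : Fin (a+1+b)} (h : a < i.val) :
    (glueFun a b α β i).val = (β ⟨i.val - (a+1), by have := i.isLt; omega⟩).val := by
  unfold glueFun; rw [dif_neg (by omega), dif_neg (by omega)]

theorem glueFun_injective (a b : ℕ) (α : Equiv.Perm (Fin a)) (β : Equiv.Perm (Fin b)) :
    Function.Injective (glueFun a b α β) := by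
  intro i j hij
  have h := congrArg Fin.val hij
  apply Fin.ext
  rcases lt_trichotomy i.val a with hi | hi | hi <;> rcases lt_trichotomy j.val a with hj | hj | hj
  · rw [glueFun_val_lt α β hi, glueFun_val_lt α β hj] at h
    have : (⟨i.val, hi⟩ : Fin a) = ⟨j.val, hj⟩ := α.injective (Fin.ext (by omega))
    simpa using congrArg Fin.val this
  · rw [glueFun_val_lt α β hi, glueFun_val_eq α β hj] at h
    have := (α ⟨i.val, hi⟩).isLt; omega
  · rw [glueFun_val_lt α β hi, glueFun_val_gt α β hj] at h
    have := (β ⟨j.val - (a+1), by have := j.isLt; omega⟩).isLt; omega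
  · rw [glueFun_val_eq α β hi, glueFun_val_lt α β hj] at h
    have := (α ⟨j.val, hj⟩).isLt; omega
  · omega
  · rw [glueFun_val_eq α β hi, glueFun_val_gt α β hj] at h
    have := (β ⟨j.val - (a+1), by have := j.isLt; omega⟩).isLt; omega
  · rw [glueFun_val_gt α β hi, glueFun_val_lt α β hj] at h
    have := (β ⟨i.val - (a+1), by have := i.isLt; omega⟩).isLt; omega
  · rw [glueFun_val_gt α β hi, glueFun_val_eq α β hj] at h
    have := (β ⟨i.val - (a+1), by have := i.isLt; omega⟩).isLt; omega
  · rw [glueFun_val_gt α β hi, glueFun_val_gt α β hj] at h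
    have : (⟨i.val - (a+1), by have := i.isLt; omega⟩ : Fin b) = ⟨j.val - (a+1), by have := j.isLt; omega⟩ :=
      β.injective (Fin.ext (by omega))
    have := congrArg Fin.val this
    simp at this; omega

noncomputable def glue (a b : ℕ) (α : Equiv.Perm (Fin a)) (β : Equiv.Perm (Fin b)) :
    Equiv.Perm (Fin (a+1+b)) :=
  Equiv.ofBijective (glueFun a b α β)
    ((Finite.injective_iff_bijective).mp (glueFun_injective a b α β))

theorem glue_apply (a b : ℕ) (α : Equiv.Perm (Fin a)) (β : Equiv.Perm (Fin b)) (i : Fin (a+1+b)) :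
    glue a b α β i = glueFun a b α β i := rfl

section GlueLemmas
variable {a b : ℕ} (α : Equiv.Perm (Fin a)) (β : Equiv.Perm (Fin b))
open Fin

theorem glue_val_lt {i : Fin (a+1+b)} (h : i.val < a) :
    ((glue a b α β) i).val = b + (α ⟨i.val, h⟩).val := glueFun_val_lt α β h

theorem glue_val_eq {i : Fin (a+1+b)} (h : i.val = a) :
    ((glue a b α β) i).val = a + b := glueFun_val_eq α β h

theorem glue_val_gt {i : Fin (a+1+b)} (h : a < i.val) :
    ((glue a b α β) i).val = (β ⟨i.val - (a+1), by have := i.isLt; omega⟩).val :=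
  glueFun_val_gt α β h

theorem glue_val_lt_bounds {i : Fin (a+1+b)} (h : i.val < a) :
    b ≤ (glue a b α β i).val ∧ (glue a b α β i).val < a + b := by
  rw [glue_val_lt α β h]
  have := (α ⟨i.val, h⟩).isLt; omega

theorem glue_val_gt_bound {i : Fin (a+1+b)} (h : a < i.val) :
    (glue a b α β i).val < b := by
  rw [glue_val_gt α β h]
  exact (β _).isLt

theorem gv1 (i : Fin a) : (glue a b α β (castAdd b (castAdd 1 i))).val = b + (α i).val := by
  rw [glue_val_lt α β (show (castAdd b (castAdd 1 i)).val < a from i.isLt)]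
  congr 2

theorem gv2 (x : Fin 1) : (glue a b α β (castAdd b (natAdd a x))).val = a + b := by
  rw [glue_val_eq α β]
  simp

theorem gv3 (j : Fin b) : (glue a b α β (natAdd (a+1) j)).val = (β j).val := by
  rw [glue_val_gt α β (show a < (natAdd (a+1) j).val by simp; omega)]
  congr 2
  apply Fin.ext
  simp

theorem glue_val_embA (x : Fin a) :
    (glue a b α β ⟨x.val, by have := x.isLt; omega⟩).val = b + (α x).val := by
  rw [glue_val_lt α β (show ((⟨x.val, by have := x.isLt; omega⟩ : Fin (a+1+b))).val < a from x.isLt)]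

theorem glue_val_embB (x : Fin b) :
    (glue a b α β ⟨a + 1 + x.val, by have := x.isLt; omega⟩).val = (β x).val := by
  rw [glue_val_gt α β (show a < ((⟨a + 1 + x.val, by have := x.isLt; omega⟩ : Fin (a+1+b))).val by simp; omega)]
  congr 2
  apply Fin.ext
  simp

theorem glue_top : glue a b α β ⟨a, by omega⟩ = ⟨a + b, by omega⟩ :=
  Fin.ext (glue_val_eq α β rfl)

theorem avoids132_glue (hα : avoids132 α) (hβ : avoids132 β) : avoids132 (glue a b α β) := by
  intro i j l hij hjl hcon
  obtain ⟨h1, h2⟩ := hcon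
  have pij : i.val < j.val := hij
  have pjl : j.val < l.val := hjl
  have v1 : (glue a b α β i).val < (glue a b α β l).val := h1
  have v2 : (glue a b α β l).val < (glue a b α β j).val := h2
  rcases lt_trichotomy i.val a with hi|hi|hi <;>
  rcases lt_trichotomy j.val a with hj|hj|hj <;>
  rcases lt_trichotomy l.val a with hl|hl|hl
  · rw [glue_val_lt α β hi, glue_val_lt α β hl] at v1
    rw [glue_val_lt α β hl, glue_val_lt α β hj] at v2
    exact hα ⟨i.val, hi⟩ ⟨j.val, hj⟩ ⟨l.val, hl⟩ pij pjl
      ⟨by simp only [Fin.lt_def]; omega, by simp only [Fin.lt_def]; omega⟩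
  · have bi := glue_val_lt_bounds α β hi
    have bj := glue_val_lt_bounds α β hj
    have bl : (glue a b α β l).val = a + b := glue_val_eq α β hl
    omega
  · have bi := glue_val_lt_bounds α β hi
    have bj := glue_val_lt_bounds α β hj
    have bl := glue_val_gt_bound α β hl
    omega
  · have bi := glue_val_lt_bounds α β hi
    have bj : (glue a b α β j).val = a + b := glue_val_eq α β hj
    have bl := glue_val_lt_bounds α β hl
    omega
  · have bi := glue_val_lt_bounds α β hi
    have bj : (glue a b α β j).val = a + b := glue_val_eq α β hj
    have bl : (glue a b α β l).val = a + b := glue_val_eq α β hl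
    omega
  · have bi := glue_val_lt_bounds α β hi
    have bj : (glue a b α β j).val = a + b := glue_val_eq α β hj
    have bl := glue_val_gt_bound α β hl
    omega
  · have bi := glue_val_lt_bounds α β hi
    have bj := glue_val_gt_bound α β hj
    have bl := glue_val_lt_bounds α β hl
    omega
  · have bi := glue_val_lt_bounds α β hi
    have bj := glue_val_gt_bound α β hj
    have bl : (glue a b α β l).val = a + b := glue_val_eq α β hl
    omega
  · have bi := glue_val_lt_bounds α β hi
    have bj := glue_val_gt_bound α β hj
    have bl := glue_val_gt_bound α β hl
    omega
  · have bi : (glue a b α β i).val = a + b := glue_val_eq α β hi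
    have bj := glue_val_lt_bounds α β hj
    have bl := glue_val_lt_bounds α β hl
    omega
  · have bi : (glue a b α β i).val = a + b := glue_val_eq α β hi
    have bj := glue_val_lt_bounds α β hj
    have bl : (glue a b α β l).val = a + b := glue_val_eq α β hl
    omega
  · have bi : (glue a b α β i).val = a + b := glue_val_eq α β hi
    have bj := glue_val_lt_bounds α β hj
    have bl := glue_val_gt_bound α β hl
    omega
  · have bi : (glue a b α β i).val = a + b := glue_val_eq α β hi
    have bj : (glue a b α β j).val = a + b := glue_val_eq α β hj
    have bl := glue_val_lt_bounds α β hl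
    omega
  · have bi : (glue a b α β i).val = a + b := glue_val_eq α β hi
    have bj : (glue a b α β j).val = a + b := glue_val_eq α β hj
    have bl : (glue a b α β l).val = a + b := glue_val_eq α β hl
    omega
  · have bi : (glue a b α β i).val = a + b := glue_val_eq α β hi
    have bj : (glue a b α β j).val = a + b := glue_val_eq α β hj
    have bl := glue_val_gt_bound α β hl
    omega
  · have bi : (glue a b α β i).val = a + b := glue_val_eq α β hi
    have bj := glue_val_gt_bound α β hj
    have bl := glue_val_lt_bounds α β hl
    omega
  · have bi : (glue a b α β i).val = a + b := glue_val_eq α β hi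
    have bj := glue_val_gt_bound α β hj
    have bl : (glue a b α β l).val = a + b := glue_val_eq α β hl
    omega
  · have bi : (glue a b α β i).val = a + b := glue_val_eq α β hi
    have bj := glue_val_gt_bound α β hj
    have bl := glue_val_gt_bound α β hl
    omega
  · have bi := glue_val_gt_bound α β hi
    have bj := glue_val_lt_bounds α β hj
    have bl := glue_val_lt_bounds α β hl
    omega
  · have bi := glue_val_gt_bound α β hi
    have bj := glue_val_lt_bounds α β hj
    have bl : (glue a b α β l).val = a + b := glue_val_eq α β hl
    omega
  · have bi := glue_val_gt_bound α β hi
    have bj := glue_val_lt_bounds α β hj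
    have bl := glue_val_gt_bound α β hl
    omega
  · have bi := glue_val_gt_bound α β hi
    have bj : (glue a b α β j).val = a + b := glue_val_eq α β hj
    have bl := glue_val_lt_bounds α β hl
    omega
  · have bi := glue_val_gt_bound α β hi
    have bj : (glue a b α β j).val = a + b := glue_val_eq α β hj
    have bl : (glue a b α β l).val = a + b := glue_val_eq α β hl
    omega
  · have bi := glue_val_gt_bound α β hi
    have bj : (glue a b α β j).val = a + b := glue_val_eq α β hj
    have bl := glue_val_gt_bound α β hl
    omega
  · have bi := glue_val_gt_bound α β hi
    have bj := glue_val_gt_bound α β hj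
    have bl := glue_val_lt_bounds α β hl
    omega
  · have bi := glue_val_gt_bound α β hi
    have bj := glue_val_gt_bound α β hj
    have bl : (glue a b α β l).val = a + b := glue_val_eq α β hl
    omega
  · rw [glue_val_gt α β hi, glue_val_gt α β hl] at v1
    rw [glue_val_gt α β hl, glue_val_gt α β hj] at v2
    exact hβ ⟨i.val - (a+1), by have := i.isLt; omega⟩ ⟨j.val - (a+1), by have := j.isLt; omega⟩
      ⟨l.val - (a+1), by have := l.isLt; omega⟩ (by simp only [Fin.mk_lt_mk]; omega)
      (by simp only [Fin.mk_lt_mk]; omega)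
      ⟨by simp only [Fin.lt_def]; omega, by simp only [Fin.lt_def]; omega⟩


theorem a12_glue : a12 (glue a b α β) = a12 α + a12 β + a := by
  rw [a12, Finset.card_filter, Fintype.sum_prod_type]
  simp only [Fin.sum_univ_add, Fin.sum_univ_one]
  simp only [Fin.lt_def, gv1, gv2, gv3, Fin.coe_castAdd, Fin.coe_natAdd, Fin.val_zero,
    add_zero, Finset.sum_add_distrib]
  have hAA : (∑ x : Fin a, ∑ y : Fin a, if x.val < y.val ∧ b + (α x).val < b + (α y).val then 1 else 0) = a12 α := by
    rw [a12, Finset.card_filter, Fintype.sum_prod_type]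
    exact Finset.sum_congr rfl fun i _ => Finset.sum_congr rfl fun j _ =>
      if_congr (by simp only [Fin.lt_def]; omega) rfl rfl
  have hBB : (∑ x : Fin b, ∑ y : Fin b, if a + 1 + x.val < a + 1 + y.val ∧ (β x).val < (β y).val then 1 else 0) = a12 β := by
    rw [a12, Finset.card_filter, Fintype.sum_prod_type]
    exact Finset.sum_congr rfl fun i _ => Finset.sum_congr rfl fun j _ =>
      if_congr (by simp only [Fin.lt_def]; omega) rfl rfl
  have hAt : (∑ x : Fin a, if x.val < a ∧ b + (α x).val < a + b then 1 else 0) = a := by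
    rw [Finset.sum_congr rfl (fun i _ => if_pos ⟨i.isLt, by have := (α i).isLt; omega⟩)]
    simp
  have hAB : (∑ x : Fin a, ∑ y : Fin b, if x.val < a + 1 + y.val ∧ b + (α x).val < (β y).val then 1 else 0) = 0 :=
    Finset.sum_eq_zero fun i _ => Finset.sum_eq_zero fun j _ =>
      if_neg (by intro hc; have := (β j).isLt; omega)
  have htA : (∑ x : Fin a, if a < x.val ∧ a + b < b + (α x).val then 1 else 0) = 0 :=
    Finset.sum_eq_zero fun i _ => if_neg (by intro hc; have := i.isLt; omega)
  have htt : (if a < a ∧ a + b < a + b then 1 else 0) = 0 := if_neg (by omega)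
  have htB : (∑ x : Fin b, if a < a + 1 + x.val ∧ a + b < (β x).val then 1 else 0) = 0 :=
    Finset.sum_eq_zero fun i _ => if_neg (by intro hc; have := (β i).isLt; omega)
  have hBA : (∑ x : Fin b, ∑ y : Fin a, if a + 1 + x.val < y.val ∧ (β x).val < b + (α y).val then 1 else 0) = 0 :=
    Finset.sum_eq_zero fun i _ => Finset.sum_eq_zero fun j _ =>
      if_neg (by intro hc; have := j.isLt; omega)
  have hBt : (∑ x : Fin b, if a + 1 + x.val < a ∧ (β x).val < a + b then 1 else 0) = 0 :=
    Finset.sum_eq_zero fun i _ => if_neg (by intro hc; omega)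
  rw [hAA, hBB, hAt, hAB, htA, htt, htB, hBA, hBt]
  omega

theorem a312_glue : a312 (glue a b α β) = a312 α + a312 β + (a + 1) * a12 β := by
  rw [a312, Finset.card_filter]
  simp only [Fintype.sum_prod_type]
  simp only [Fin.sum_univ_add, Fin.sum_univ_one]
  simp only [Fin.lt_def, gv1, gv2, gv3, Fin.coe_castAdd, Fin.coe_natAdd, Fin.val_zero,
    add_zero, Finset.sum_add_distrib]
  have hAAA : (∑ x0 : Fin a, ∑ x1 : Fin a, ∑ x2 : Fin a, if x0.val < x1.val ∧ x1.val < x2.val ∧ b + (α x1).val < b + (α x2).val ∧ b + (α x2).val < b + (α x0).val then 1 else 0) = a312 α := by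
    rw [a312, Finset.card_filter]
    simp only [Fintype.sum_prod_type]
    exact Finset.sum_congr rfl fun i _ => Finset.sum_congr rfl fun j _ =>
      Finset.sum_congr rfl fun l _ =>
      if_congr (by simp only [Fin.lt_def]; omega) rfl rfl
  have hAAt : (∑ x0 : Fin a, ∑ x1 : Fin a, if x0.val < x1.val ∧ x1.val < a ∧ b + (α x1).val < a + b ∧ a + b < b + (α x0).val then 1 else 0) = 0 :=
    Finset.sum_eq_zero fun x0 _ => Finset.sum_eq_zero fun x1 _ => if_neg (by intro hc; have := x0.isLt; have := (α x0).isLt; have := x1.isLt; have := (α x1).isLt; omega)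
  have hAAB : (∑ x0 : Fin a, ∑ x1 : Fin a, ∑ x2 : Fin b, if x0.val < x1.val ∧ x1.val < a + 1 + x2.val ∧ b + (α x1).val < (β x2).val ∧ (β x2).val < b + (α x0).val then 1 else 0) = 0 :=
    Finset.sum_eq_zero fun x0 _ => Finset.sum_eq_zero fun x1 _ => Finset.sum_eq_zero fun x2 _ => if_neg (by intro hc; have := x0.isLt; have := (α x0).isLt; have := x1.isLt; have := (α x1).isLt; have := x2.isLt; have := (β x2).isLt; omega)
  have hAtA : (∑ x0 : Fin a, ∑ x1 : Fin a, if x0.val < a ∧ a < x1.val ∧ a + b < b + (α x1).val ∧ b + (α x1).val < b + (α x0).val then 1 else 0) = 0 :=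
    Finset.sum_eq_zero fun x0 _ => Finset.sum_eq_zero fun x1 _ => if_neg (by intro hc; have := x0.isLt; have := (α x0).isLt; have := x1.isLt; have := (α x1).isLt; omega)
  have hAtt : (∑ x0 : Fin a, if x0.val < a ∧ a < a ∧ a + b < a + b ∧ a + b < b + (α x0).val then 1 else 0) = 0 :=
    Finset.sum_eq_zero fun x0 _ => if_neg (by intro hc; have := x0.isLt; have := (α x0).isLt; omega)
  have hAtB : (∑ x0 : Fin a, ∑ x1 : Fin b, if x0.val < a ∧ a < a + 1 + x1.val ∧ a + b < (β x1).val ∧ (β x1).val < b + (α x0).val then 1 else 0) = 0 :=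
    Finset.sum_eq_zero fun x0 _ => Finset.sum_eq_zero fun x1 _ => if_neg (by intro hc; have := x0.isLt; have := (α x0).isLt; have := x1.isLt; have := (β x1).isLt; omega)
  have hABA : (∑ x0 : Fin a, ∑ x1 : Fin b, ∑ x2 : Fin a, if x0.val < a + 1 + x1.val ∧ a + 1 + x1.val < x2.val ∧ (β x1).val < b + (α x2).val ∧ b + (α x2).val < b + (α x0).val then 1 else 0) = 0 :=
    Finset.sum_eq_zero fun x0 _ => Finset.sum_eq_zero fun x1 _ => Finset.sum_eq_zero fun x2 _ => if_neg (by intro hc; have := x0.isLt; have := (α x0).isLt; have := x1.isLt; have := (β x1).isLt; have := x2.isLt; have := (α x2).isLt; omega)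
  have hABt : (∑ x0 : Fin a, ∑ x1 : Fin b, if x0.val < a + 1 + x1.val ∧ a + 1 + x1.val < a ∧ (β x1).val < a + b ∧ a + b < b + (α x0).val then 1 else 0) = 0 :=
    Finset.sum_eq_zero fun x0 _ => Finset.sum_eq_zero fun x1 _ => if_neg (by intro hc; have := x0.isLt; have := (α x0).isLt; have := x1.isLt; have := (β x1).isLt; omega)
  have hABB : (∑ x0 : Fin a, ∑ x1 : Fin b, ∑ x2 : Fin b, if x0.val < a + 1 + x1.val ∧ a + 1 + x1.val < a + 1 + x2.val ∧ (β x1).val < (β x2).val ∧ (β x2).val < b + (α x0).val then 1 else 0) = a * a12 β := by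
    have inner : ∀ x0 : Fin a, (∑ x1 : Fin b, ∑ x2 : Fin b,
        if x0.val < a + 1 + x1.val ∧ a + 1 + x1.val < a + 1 + x2.val ∧ (β x1).val < (β x2).val ∧ (β x2).val < b + (α x0).val then 1 else 0) = a12 β := by
      intro x0
      rw [a12, Finset.card_filter, Fintype.sum_prod_type]
      refine Finset.sum_congr rfl fun j _ => Finset.sum_congr rfl fun l _ =>
        if_congr ?_ rfl rfl
      have := x0.isLt; have := (β l).isLt
      simp only [Fin.lt_def]; omega
    rw [Finset.sum_congr rfl fun x0 _ => inner x0]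
    simp [mul_comm]
  have htAA : (∑ x0 : Fin a, ∑ x1 : Fin a, if a < x0.val ∧ x0.val < x1.val ∧ b + (α x0).val < b + (α x1).val ∧ b + (α x1).val < a + b then 1 else 0) = 0 :=
    Finset.sum_eq_zero fun x0 _ => Finset.sum_eq_zero fun x1 _ => if_neg (by intro hc; have := x0.isLt; have := (α x0).isLt; have := x1.isLt; have := (α x1).isLt; omega)
  have htAt : (∑ x0 : Fin a, if a < x0.val ∧ x0.val < a ∧ b + (α x0).val < a + b ∧ a + b < a + b then 1 else 0) = 0 :=
    Finset.sum_eq_zero fun x0 _ => if_neg (by intro hc; have := x0.isLt; have := (α x0).isLt; omega)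
  have htAB : (∑ x0 : Fin a, ∑ x1 : Fin b, if a < x0.val ∧ x0.val < a + 1 + x1.val ∧ b + (α x0).val < (β x1).val ∧ (β x1).val < a + b then 1 else 0) = 0 :=
    Finset.sum_eq_zero fun x0 _ => Finset.sum_eq_zero fun x1 _ => if_neg (by intro hc; have := x0.isLt; have := (α x0).isLt; have := x1.isLt; have := (β x1).isLt; omega)
  have httA : (∑ x0 : Fin a, if a < a ∧ a < x0.val ∧ a + b < b + (α x0).val ∧ b + (α x0).val < a + b then 1 else 0) = 0 :=
    Finset.sum_eq_zero fun x0 _ => if_neg (by intro hc; have := x0.isLt; have := (α x0).isLt; omega)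
  have httt : (if a < a ∧ a < a ∧ a + b < a + b ∧ a + b < a + b then 1 else 0) = 0 :=
    if_neg (by omega)
  have httB : (∑ x0 : Fin b, if a < a ∧ a < a + 1 + x0.val ∧ a + b < (β x0).val ∧ (β x0).val < a + b then 1 else 0) = 0 :=
    Finset.sum_eq_zero fun x0 _ => if_neg (by intro hc; have := x0.isLt; have := (β x0).isLt; omega)
  have htBA : (∑ x0 : Fin b, ∑ x1 : Fin a, if a < a + 1 + x0.val ∧ a + 1 + x0.val < x1.val ∧ (β x0).val < b + (α x1).val ∧ b + (α x1).val < a + b then 1 else 0) = 0 :=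
    Finset.sum_eq_zero fun x0 _ => Finset.sum_eq_zero fun x1 _ => if_neg (by intro hc; have := x0.isLt; have := (β x0).isLt; have := x1.isLt; have := (α x1).isLt; omega)
  have htBt : (∑ x0 : Fin b, if a < a + 1 + x0.val ∧ a + 1 + x0.val < a ∧ (β x0).val < a + b ∧ a + b < a + b then 1 else 0) = 0 :=
    Finset.sum_eq_zero fun x0 _ => if_neg (by intro hc; have := x0.isLt; have := (β x0).isLt; omega)
  have htBB : (∑ x0 : Fin b, ∑ x1 : Fin b, if a < a + 1 + x0.val ∧ a + 1 + x0.val < a + 1 + x1.val ∧ (β x0).val < (β x1).val ∧ (β x1).val < a + b then 1 else 0) = a12 β := by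
    rw [a12, Finset.card_filter, Fintype.sum_prod_type]
    refine Finset.sum_congr rfl fun j _ => Finset.sum_congr rfl fun l _ =>
      if_congr ?_ rfl rfl
    have := (β l).isLt
    simp only [Fin.lt_def]; omega
  have hBAA : (∑ x0 : Fin b, ∑ x1 : Fin a, ∑ x2 : Fin a, if a + 1 + x0.val < x1.val ∧ x1.val < x2.val ∧ b + (α x1).val < b + (α x2).val ∧ b + (α x2).val < (β x0).val then 1 else 0) = 0 :=
    Finset.sum_eq_zero fun x0 _ => Finset.sum_eq_zero fun x1 _ => Finset.sum_eq_zero fun x2 _ => if_neg (by intro hc; have := x0.isLt; have := (β x0).isLt; have := x1.isLt; have := (α x1).isLt; have := x2.isLt; have := (α x2).isLt; omega)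
  have hBAt : (∑ x0 : Fin b, ∑ x1 : Fin a, if a + 1 + x0.val < x1.val ∧ x1.val < a ∧ b + (α x1).val < a + b ∧ a + b < (β x0).val then 1 else 0) = 0 :=
    Finset.sum_eq_zero fun x0 _ => Finset.sum_eq_zero fun x1 _ => if_neg (by intro hc; have := x0.isLt; have := (β x0).isLt; have := x1.isLt; have := (α x1).isLt; omega)
  have hBAB : (∑ x0 : Fin b, ∑ x1 : Fin a, ∑ x2 : Fin b, if a + 1 + x0.val < x1.val ∧ x1.val < a + 1 + x2.val ∧ b + (α x1).val < (β x2).val ∧ (β x2).val < (β x0).val then 1 else 0) = 0 :=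
    Finset.sum_eq_zero fun x0 _ => Finset.sum_eq_zero fun x1 _ => Finset.sum_eq_zero fun x2 _ => if_neg (by intro hc; have := x0.isLt; have := (β x0).isLt; have := x1.isLt; have := (α x1).isLt; have := x2.isLt; have := (β x2).isLt; omega)
  have hBtA : (∑ x0 : Fin b, ∑ x1 : Fin a, if a + 1 + x0.val < a ∧ a < x1.val ∧ a + b < b + (α x1).val ∧ b + (α x1).val < (β x0).val then 1 else 0) = 0 :=
    Finset.sum_eq_zero fun x0 _ => Finset.sum_eq_zero fun x1 _ => if_neg (by intro hc; have := x0.isLt; have := (β x0).isLt; have := x1.isLt; have := (α x1).isLt; omega)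
  have hBtt : (∑ x0 : Fin b, if a + 1 + x0.val < a ∧ a < a ∧ a + b < a + b ∧ a + b < (β x0).val then 1 else 0) = 0 :=
    Finset.sum_eq_zero fun x0 _ => if_neg (by intro hc; have := x0.isLt; have := (β x0).isLt; omega)
  have hBtB : (∑ x0 : Fin b, ∑ x1 : Fin b, if a + 1 + x0.val < a ∧ a < a + 1 + x1.val ∧ a + b < (β x1).val ∧ (β x1).val < (β x0).val then 1 else 0) = 0 :=
    Finset.sum_eq_zero fun x0 _ => Finset.sum_eq_zero fun x1 _ => if_neg (by intro hc; have := x0.isLt; have := (β x0).isLt; have := x1.isLt; have := (β x1).isLt; omega)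
  have hBBA : (∑ x0 : Fin b, ∑ x1 : Fin b, ∑ x2 : Fin a, if a + 1 + x0.val < a + 1 + x1.val ∧ a + 1 + x1.val < x2.val ∧ (β x1).val < b + (α x2).val ∧ b + (α x2).val < (β x0).val then 1 else 0) = 0 :=
    Finset.sum_eq_zero fun x0 _ => Finset.sum_eq_zero fun x1 _ => Finset.sum_eq_zero fun x2 _ => if_neg (by intro hc; have := x0.isLt; have := (β x0).isLt; have := x1.isLt; have := (β x1).isLt; have := x2.isLt; have := (α x2).isLt; omega)
  have hBBt : (∑ x0 : Fin b, ∑ x1 : Fin b, if a + 1 + x0.val < a + 1 + x1.val ∧ a + 1 + x1.val < a ∧ (β x1).val < a + b ∧ a + b < (β x0).val then 1 else 0) = 0 :=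
    Finset.sum_eq_zero fun x0 _ => Finset.sum_eq_zero fun x1 _ => if_neg (by intro hc; have := x0.isLt; have := (β x0).isLt; have := x1.isLt; have := (β x1).isLt; omega)
  have hBBB : (∑ x0 : Fin b, ∑ x1 : Fin b, ∑ x2 : Fin b, if a + 1 + x0.val < a + 1 + x1.val ∧ a + 1 + x1.val < a + 1 + x2.val ∧ (β x1).val < (β x2).val ∧ (β x2).val < (β x0).val then 1 else 0) = a312 β := by
    rw [a312, Finset.card_filter]
    simp only [Fintype.sum_prod_type]
    exact Finset.sum_congr rfl fun i _ => Finset.sum_congr rfl fun j _ =>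
      Finset.sum_congr rfl fun l _ =>
      if_congr (by simp only [Fin.lt_def]; omega) rfl rfl
  rw [hAAA, hAAt, hAAB, hAtA, hAtt, hAtB, hABA, hABt, hABB, htAA, htAt, htAB, httA, httt, httB, htBA, htBt, htBB, hBAA, hBAt, hBAB, hBtA, hBtt, hBtB, hBBA, hBBt, hBBB]
  ring


theorem avoidsA_of_glue (hg : avoids132 (glue a b α β)) : avoids132 α := by
  intro x y z hxy hyz hcon
  obtain ⟨c1, c2⟩ := hcon
  have c1' : (α x).val < (α z).val := c1
  have c2' : (α z).val < (α y).val := c2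
  refine hg ⟨x.val, by have := x.isLt; omega⟩ ⟨y.val, by have := y.isLt; omega⟩
    ⟨z.val, by have := z.isLt; omega⟩ hxy hyz ⟨?_, ?_⟩
  · rw [Fin.lt_def, glue_val_embA, glue_val_embA]; omega
  · rw [Fin.lt_def, glue_val_embA, glue_val_embA]; omega

theorem avoidsB_of_glue (hg : avoids132 (glue a b α β)) : avoids132 β := by
  intro x y z hxy hyz hcon
  obtain ⟨c1, c2⟩ := hcon
  have c1' : (β x).val < (β z).val := c1
  have c2' : (β z).val < (β y).val := c2
  have pxy : x.val < y.val := hxy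
  have pyz : y.val < z.val := hyz
  refine hg ⟨a + 1 + x.val, by have := x.isLt; omega⟩ ⟨a + 1 + y.val, by have := y.isLt; omega⟩
    ⟨a + 1 + z.val, by have := z.isLt; omega⟩ (by simp only [Fin.mk_lt_mk]; omega)
    (by simp only [Fin.mk_lt_mk]; omega) ⟨?_, ?_⟩
  · rw [Fin.lt_def, glue_val_embB, glue_val_embB]; omega
  · rw [Fin.lt_def, glue_val_embB, glue_val_embB]; omega

theorem avoids132_glue_iff :
    avoids132 (glue a b α β) ↔ avoids132 α ∧ avoids132 β :=
  ⟨fun hg => ⟨avoidsA_of_glue α β hg, avoidsB_of_glue α β hg⟩,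
   fun ⟨h1, h2⟩ => avoids132_glue α β h1 h2⟩

end GlueLemmas

section Struct
variable {a b : ℕ}

theorem struct (π : Equiv.Perm (Fin (a+1+b))) (hav : avoids132 π)
    (htop : π ⟨a, by omega⟩ = ⟨a+b, by omega⟩) :
    (∀ i : Fin (a+1+b), a < i.val → (π i).val < b) ∧
    (∀ i : Fin (a+1+b), i.val < a → b ≤ (π i).val ∧ (π i).val < a + b) := by
  have hmax : ∀ x : Fin (a+1+b), x.val ≠ a → (π x).val < a + b := by
    intro x hx
    have h1 := (π x).isLt
    have h2 : (π x).val ≠ a + b := by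
      intro h
      have : π x = π ⟨a, by omega⟩ := by rw [htop]; exact Fin.ext h
      have := congrArg Fin.val (π.injective this)
      simp at this; omega
    omega
  have hstep : ∀ i j : Fin (a+1+b), i.val < a → a < j.val → (π j).val < (π i).val := by
    intro i j hi hj
    by_contra hcon
    push_neg at hcon
    have hne : (π i).val ≠ (π j).val := by
      intro h
      have := congrArg Fin.val (π.injective (Fin.ext h))
      omega
    refine hav i ⟨a, by omega⟩ j (show i.val < a from hi) (show a < j.val from hj) ⟨?_, ?_⟩
    · show (π i).val < (π j).val
      omega
    · rw [htop]
      show (π j).val < a + b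
      exact hmax j (by omega)
  constructor
  · intro j hj
    have hmaps : ∀ x ∈ Finset.Iic (⟨a, by omega⟩ : Fin (a+1+b)), π x ∈ Finset.Ioi (π j) := by
      intro x hx
      rw [Finset.mem_Iic] at hx
      rw [Finset.mem_Ioi]
      have hx' : x.val ≤ a := hx
      rcases Nat.lt_or_ge x.val a with h | h
      · exact hstep x j h hj
      · have hxa : x = ⟨a, by omega⟩ := Fin.ext (show x.val = a by omega)
        rw [hxa, htop]
        show (π j).val < a + b
        exact hmax j (by omega)
    have hinj : Set.InjOn π (Finset.Iic (⟨a, by omega⟩ : Fin (a+1+b))) :=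
      fun u _ v _ h => π.injective h
    have hcard := Finset.card_le_card_of_injOn π hmaps hinj
    rw [Fin.card_Iic, Fin.card_Ioi] at hcard
    have hcard' : a + 1 ≤ a + 1 + b - 1 - (π j).val := hcard
    have := (π j).isLt
    omega
  · intro i hi
    have hmaps : ∀ x ∈ Finset.Ioi (⟨a, by omega⟩ : Fin (a+1+b)), π x ∈ Finset.Iio (π i) := by
      intro x hx
      rw [Finset.mem_Ioi] at hx
      rw [Finset.mem_Iio]
      exact hstep i x hi hx
    have hinj : Set.InjOn π (Finset.Ioi (⟨a, by omega⟩ : Fin (a+1+b))) :=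
      fun u _ v _ h => π.injective h
    have hcard := Finset.card_le_card_of_injOn π hmaps hinj
    rw [Fin.card_Ioi, Fin.card_Iio] at hcard
    have hcard' : a + 1 + b - 1 - a ≤ (π i).val := hcard
    exact ⟨by omega, hmax i (by omega)⟩

def upA (a b : ℕ) (x : Fin a) : Fin (a+1+b) := ⟨x.val, by have := x.isLt; omega⟩

def upB (a b : ℕ) (x : Fin b) : Fin (a+1+b) := ⟨a + 1 + x.val, by have := x.isLt; omega⟩

noncomputable def extractA (π : Equiv.Perm (Fin (a+1+b)))
    (hA : ∀ x : Fin a, b ≤ (π (upA a b x)).val ∧ (π (upA a b x)).val < a + b) :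
    Equiv.Perm (Fin a) :=
  Equiv.ofBijective (fun x => ⟨(π (upA a b x)).val - b, by have h1 := (hA x).1; have h2 := (hA x).2; omega⟩)
    (Finite.injective_iff_bijective.mp (fun x y h => by
      simp only [Fin.mk.injEq] at h
      have hx := (hA x).1
      have hy := (hA y).1
      have hpi : π (upA a b x) = π (upA a b y) := Fin.ext (by omega)
      have h2 := congrArg Fin.val (π.injective hpi)
      simp only [upA] at h2
      exact Fin.ext h2))

noncomputable def extractB (π : Equiv.Perm (Fin (a+1+b)))
    (hB : ∀ x : Fin b, (π (upB a b x)).val < b) :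
    Equiv.Perm (Fin b) :=
  Equiv.ofBijective (fun x => ⟨(π (upB a b x)).val, hB x⟩)
    (Finite.injective_iff_bijective.mp (fun x y h => by
      simp only [Fin.mk.injEq] at h
      have hpi : π (upB a b x) = π (upB a b y) := Fin.ext h
      have h2 := congrArg Fin.val (π.injective hpi)
      simp only [upB] at h2
      exact Fin.ext (by omega)))

theorem glue_extract (π : Equiv.Perm (Fin (a+1+b)))
    (hA : ∀ x : Fin a, b ≤ (π (upA a b x)).val ∧ (π (upA a b x)).val < a + b)
    (hB : ∀ x : Fin b, (π (upB a b x)).val < b)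
    (htop : π ⟨a, by omega⟩ = ⟨a+b, by omega⟩) :
    glue a b (extractA π hA) (extractB π hB) = π := by
  apply Equiv.ext
  intro i
  apply Fin.ext
  rcases lt_trichotomy i.val a with hi | hi | hi
  · rw [glue_val_lt _ _ hi]
    show b + ((π (upA a b ⟨i.val, hi⟩)).val - b) = (π i).val
    have h1 := (hA ⟨i.val, hi⟩).1
    have h2 : upA a b ⟨i.val, hi⟩ = i := Fin.ext rfl
    rw [h2] at h1 ⊢
    omega
  · have h2 : i = ⟨a, by omega⟩ := Fin.ext hi
    rw [h2, htop]
    exact glue_val_eq _ _ rfl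
  · rw [glue_val_gt _ _ hi]
    show (π (upB a b ⟨i.val - (a+1), by have := i.isLt; omega⟩)).val = (π i).val
    congr 2
    apply Fin.ext
    simp only [upB]
    omega

end Struct

theorem fiber_sum (a b : ℕ) (t q : ℤ) :
    ∑ π ∈ (AV132 (a+1+b)).filter
      (fun π => (π.symm ⟨a+1+b-1, by omega⟩).val + 1 = a+1),
      t ^ a312 π * q ^ a12 π
    = q ^ a * Q312 a t q * Q312 b t (t ^ (a+1) * q) := by
  have hcond : ∀ π : Equiv.Perm (Fin (a+1+b)),
      ((π.symm ⟨a+1+b-1, by omega⟩).val + 1 = a+1) ↔ π ⟨a, by omega⟩ = ⟨a+b, by omega⟩ := by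
    intro π
    constructor
    · intro h
      have h2 : π.symm ⟨a+1+b-1, by omega⟩ = ⟨a, by omega⟩ := by
        apply Fin.ext
        show (π.symm ⟨a+1+b-1, by omega⟩).val = a
        omega
      rw [← h2, Equiv.apply_symm_apply]
      exact Fin.ext (show a+1+b-1 = a+b by omega)
    · intro h
      have h2 : π.symm ⟨a+1+b-1, by omega⟩ = ⟨a, by omega⟩ := by
        have h3 : (⟨a+1+b-1, by omega⟩ : Fin (a+1+b)) = π ⟨a, by omega⟩ :=
          (Fin.ext (show a+1+b-1 = a+b by omega) :
            (⟨a+1+b-1, by omega⟩ : Fin (a+1+b)) = ⟨a+b, by omega⟩).trans h.symm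
        rw [h3, Equiv.symm_apply_apply]
      rw [h2]
  rw [Finset.filter_congr (fun π _ => hcond π)]
  have hbij : ∑ p ∈ (AV132 a) ×ˢ (AV132 b), t ^ a312 (glue a b p.1 p.2) * q ^ a12 (glue a b p.1 p.2)
      = ∑ π ∈ (AV132 (a+1+b)).filter (fun π => π ⟨a, by omega⟩ = ⟨a+b, by omega⟩),
          t ^ a312 π * q ^ a12 π := by
    refine Finset.sum_bij (fun p _ => glue a b p.1 p.2) ?_ ?_ ?_ ?_
    · rintro ⟨α, β⟩ hp
      rw [Finset.mem_product, AV132, AV132, Finset.mem_filter, Finset.mem_filter] at hp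
      refine Finset.mem_filter.mpr ⟨Finset.mem_filter.mpr ⟨Finset.mem_univ _, ?_⟩, ?_⟩
      · exact avoids132_glue α β hp.1.2 hp.2.2
      · exact glue_top α β
    · rintro ⟨α, β⟩ h1 ⟨α', β'⟩ h2 heq
      have hv := fun z => congrArg (fun (e : Equiv.Perm (Fin (a+1+b))) => (e z).val) heq
      simp only at hv
      have hα : α = α' := by
        apply Equiv.ext
        intro x
        apply Fin.ext
        have := hv ⟨x.val, by have := x.isLt; omega⟩
        rw [glue_val_embA, glue_val_embA] at this
        omega
      have hβ : β = β' := by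
        apply Equiv.ext
        intro x
        apply Fin.ext
        have := hv ⟨a + 1 + x.val, by have := x.isLt; omega⟩
        rw [glue_val_embB, glue_val_embB] at this
        omega
      simp [hα, hβ]
    · intro π hπ
      rw [Finset.mem_filter] at hπ
      obtain ⟨hπ1, htop⟩ := hπ
      rw [AV132, Finset.mem_filter] at hπ1
      have hav := hπ1.2
      obtain ⟨hB0, hA0⟩ := struct π hav htop
      have hA : ∀ x : Fin a, b ≤ (π (upA a b x)).val ∧ (π (upA a b x)).val < a + b :=
        fun x => hA0 (upA a b x) x.isLt
      have hB : ∀ x : Fin b, (π (upB a b x)).val < b :=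
        fun x => hB0 (upB a b x) (show a < a + 1 + x.val by omega)
      have hge : glue a b (extractA π hA) (extractB π hB) = π := glue_extract π hA hB htop
      have hg : avoids132 (glue a b (extractA π hA) (extractB π hB)) := by
        rw [hge]; exact hav
      refine ⟨(extractA π hA, extractB π hB), ?_, hge⟩
      rw [Finset.mem_product]
      exact ⟨Finset.mem_filter.mpr ⟨Finset.mem_univ _, avoidsA_of_glue _ _ hg⟩,
             Finset.mem_filter.mpr ⟨Finset.mem_univ _, avoidsB_of_glue _ _ hg⟩⟩
    · intro p hp
      rfl
  rw [← hbij, Finset.sum_product]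
  rw [Q312, Q312, mul_assoc, Finset.sum_mul_sum, Finset.mul_sum]
  refine Finset.sum_congr rfl fun α' _ => ?_
  rw [Finset.mul_sum]
  refine Finset.sum_congr rfl fun β' _ => ?_
  rw [a312_glue, a12_glue, mul_pow, ← pow_mul]
  ring

/-- `Q_n(t,q) = ∑_{k=1}^n q^{k-1} Q_{k-1}(t, q) Q_{n-k}(t, t^k q)`, `Q_0 = 1`. -/
theorem Q312_recurrence :
    (∀ t q : ℤ, Q312 0 t q = 1) ∧
    ∀ n : ℕ, 1 ≤ n → ∀ t q : ℤ,
      Q312 n t q = ∑ k ∈ Finset.Icc 1 n, q ^ (k - 1) * Q312 (k - 1) t q * Q312 (n - k) t (t ^ k * q) := by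
  constructor
  · intro t q
    have h1 : AV132 0 = {1} := by
      apply Finset.eq_singleton_iff_unique_mem.mpr
      constructor
      · exact Finset.mem_filter.mpr ⟨Finset.mem_univ _, fun i _ _ _ _ => i.elim0⟩
      · intro π _
        exact Equiv.ext fun i => i.elim0
    rw [Q312, h1, Finset.sum_singleton]
    simp [a312, a12]
  · intro n hn t q
    have hmaps : ∀ π ∈ AV132 n, (π.symm ⟨n-1, by omega⟩).val + 1 ∈ Finset.Icc 1 n := by
      intro π _
      rw [Finset.mem_Icc]
      have := (π.symm ⟨n-1, by omega⟩).isLt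
      omega
    rw [Q312, ← Finset.sum_fiberwise_of_maps_to hmaps]
    refine Finset.sum_congr rfl fun k hk => ?_
    rw [Finset.mem_Icc] at hk
    obtain ⟨a, rfl⟩ : ∃ a, k = a + 1 := ⟨k - 1, by omega⟩
    obtain ⟨b, rfl⟩ : ∃ b, n = a + 1 + b := ⟨n - (a + 1), by omega⟩
    have e1 : a + 1 - 1 = a := by omega
    have e2 : a + 1 + b - (a + 1) = b := by omega
    rw [e1, e2]
    exact fiber_sum a b t q
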